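/- arXiv:1507.06963 — 3 statements merged into one kernel-verified Lean document; each statement's English description precedes it below -/
import Mathlib

section
/- Let A be the 6×6 block matrix A = [[0, (1/2)I₃],[Λ₁, Σ₁]] where Λ₁ is diagonal and Σ₁ ∈ 𝒮 (anti-diagonal type with nonzero entries only at (1,3),(3,1)), and let B be the 6×3 block matrix B = [[0₃ₓ₃],[B₂]] where B₂ is a 3×3 matrix with nonzero entries only at (1,3) and (3,1). Then for every k ≥ 0, the second row of the bottom 3×3 block of AᵏB is zero; in particular, row 5 of the 6×18 controllability matrix [B, AB, A²B, A³B, A⁴B, A⁵B] is identically zero. -/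
theorem row5_of_pow_mul_zero
    (f41 f52 f63 f46 f64 b2 J11 J33 : ℝ)
    (A : Matrix (Fin 6) (Fin 6) ℝ)
    (B : Matrix (Fin 6) (Fin 3) ℝ)
    (hA : A = !![0, 0, 0, (1:ℝ)/2, 0, 0;
                 0, 0, 0, 0, (1:ℝ)/2, 0;
                 0, 0, 0, 0, 0, (1:ℝ)/2;
                 f41, 0, 0, 0, 0, f46;
                 0, f52, 0, 0, 0, 0;
                 0, 0, f63, f64, 0, 0])
    (hB : B = !![0, 0, 0;
                 0, 0, 0;
                 0, 0, 0;
                 0, 0, -b2 / J11;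
                 0, 0, 0;
                 b2 / J33, 0, 0]) :
    ∀ (k : ℕ) (j : Fin 3), (A ^ k * B) 4 j = 0 := by
  have key : ∀ k : ℕ, ∀ j : Fin 3,
      (A ^ k * B) 1 j = 0 ∧ (A ^ k * B) 4 j = 0 := by
    intro k
    induction k with
    | zero =>
      intro j
      subst hB
      rw [pow_zero, Matrix.one_mul]
      fin_cases j <;> simp [Matrix.vecHead, Matrix.vecTail]
    | succ n ih =>
      intro j
      have h1 := fun j => (ih j).1
      have h4 := fun j => (ih j).2
      have hpow : A ^ (n + 1) * B = A * (A ^ n * B) := by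
        rw [pow_succ', Matrix.mul_assoc]
      set M := A ^ n * B with hM
      rw [hpow]
      constructor <;>
      · rw [Matrix.mul_apply, Fin.sum_univ_six, hA]
        simp [Matrix.cons_val_zero, Matrix.cons_val_one, Matrix.head_cons,
          Matrix.cons_val_succ, h1 j, h4 j]
  intro k j
  exact (key k j).2
end

section
/- The rank of the 6×18 controllability matrix [B, AB, A²B, …, A⁵B] for the equatorial-orbit magnetic attitude control system is strictly less than 6; hence the pair (A,B) is not controllable. -/
/-!
The coordinates `x₂` and `x₅` (indices `1` and `4`) form a closed subsystem: `A` maps them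
only to each other and `B` does not actuate them. Hence every column of every `Aᵏ B` lies in
the proper subspace `{x | x₂ = x₅ = 0}`, and so does the column space of the controllability
matrix.
-/

namespace Matrix

variable {m n : Type*} [Fintype m]

theorem col_mul_mem_of_mulVec_mem {R : Type*} [CommSemiring R] (W : Submodule R (m → R))
    {A : Matrix m m R} {B : Matrix m n R} (hA : ∀ x ∈ W, A *ᵥ x ∈ W) (hB : ∀ j, B.col j ∈ W)
    (j : n) : (A * B).col j ∈ W := by
  have hcol : (A * B).col j = A *ᵥ B.col j := by
    ext i
    simp only [col_apply, mul_apply, mulVec, dotProduct]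
  exact hcol ▸ hA _ (hB j)

theorem col_pow_mul_mem_of_mulVec_mem [DecidableEq m] {R : Type*} [CommSemiring R]
    (W : Submodule R (m → R)) {A : Matrix m m R} {B : Matrix m n R}
    (hA : ∀ x ∈ W, A *ᵥ x ∈ W) (hB : ∀ j, B.col j ∈ W) (k : ℕ) (j : n) :
    (A ^ k * B).col j ∈ W := by
  induction k generalizing j with
  | zero => simpa using hB j
  | succ k ih =>
    rw [pow_succ', Matrix.mul_assoc]
    exact col_mul_mem_of_mulVec_mem W hA ih j

theorem rank_lt_of_col_mem [Fintype n] {K : Type*} [Field K] (W : Submodule K (m → K)) (hW : W ≠ ⊤)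
    {M : Matrix m n K} (hM : ∀ j, M.col j ∈ W) : M.rank < Fintype.card m := by
  calc M.rank = Module.finrank K (Submodule.span K (Set.range M.col)) :=
        M.rank_eq_finrank_span_cols
    _ ≤ Module.finrank K W :=
        Submodule.finrank_mono (Submodule.span_le.mpr (Set.range_subset_iff.mpr hM))
    _ < Module.finrank K (m → K) := Submodule.finrank_lt hW
    _ = Fintype.card m := Module.finrank_fintype_fun_eq_card K

end Matrix

theorem equatorial_not_controllable
    (f41 f52 f63 f46 f64 b2 J11 J33 : ℝ)
    (A : Matrix (Fin 6) (Fin 6) ℝ)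
    (B : Matrix (Fin 6) (Fin 3) ℝ)
    (hA : A = !![0, 0, 0, (1:ℝ)/2, 0, 0;
                 0, 0, 0, 0, (1:ℝ)/2, 0;
                 0, 0, 0, 0, 0, (1:ℝ)/2;
                 f41, 0, 0, 0, 0, f46;
                 0, f52, 0, 0, 0, 0;
                 0, 0, f63, f64, 0, 0])
    (hB : B = !![0, 0, 0;
                 0, 0, 0;
                 0, 0, 0;
                 0, 0, -b2 / J11;
                 0, 0, 0;
                 b2 / J33, 0, 0])
    (ctrb : Matrix (Fin 6) (Fin 18) ℝ)
    (hctrb : ∀ (i : Fin 6) (j : Fin 18),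
      ctrb i j = (A ^ (j.val / 3) * B) i ⟨j.val % 3, by omega⟩) :
    ctrb.rank < 6 := by
  let W : Submodule ℝ (Fin 6 → ℝ) :=
    LinearMap.ker (LinearMap.proj 1) ⊓ LinearMap.ker (LinearMap.proj 4)
  have mem_W (x : Fin 6 → ℝ) : x ∈ W ↔ x 1 = 0 ∧ x 4 = 0 := by
    simp only [W, Submodule.mem_inf, LinearMap.mem_ker, LinearMap.proj_apply]
  have hW : W ≠ ⊤ := fun h => by
    have hmem : Pi.single (1 : Fin 6) (1 : ℝ) ∈ W := h ▸ Submodule.mem_top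
    simp [mem_W] at hmem
  have hAW : ∀ x ∈ W, A.mulVec x ∈ W := by
    intro x hx
    rw [mem_W] at hx ⊢
    subst hA
    simp [Matrix.mulVec, dotProduct, Fin.sum_univ_succ, hx]
  have hBW : ∀ j, B.col j ∈ W := by
    intro j
    rw [mem_W]
    subst hB
    fin_cases j <;> simp
  have hctrbW : ∀ j, ctrb.col j ∈ W := fun j => by
    have hcol : ctrb.col j = (A ^ (j.val / 3) * B).col ⟨j.val % 3, by omega⟩ :=
      funext fun i => hctrb i j
    exact hcol ▸ Matrix.col_pow_mul_mem_of_mulVec_mem W hAW hBW _ _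
  simpa using Matrix.rank_lt_of_col_mem W hW hctrbW
end

section
/- Under the conditions sin(i_m) ≠ 0, cos(i_m) ≠ 0, J₃₃ ≠ J₂₂, and J₂₂(J₁₁−J₂₂+J₃₃) ≠ 6J₃₃(J₃₃−J₁₁), both f₆₄b₄₂(t_c) − 2b₆₂′(t_c) ≠ 0 and E ≠ 0 hold (with quantities as defined at ω₀t_c = π/2), hence the determinant −b₄₂(f₆₄b₄₂−2b₆₂′)b₅₁·E of the selected 6×6 submatrix of [K₀(t_c),K₁(t_c),K₂(t_c)] is nonzero. -/
open Real

theorem determinant_nonzero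
    (muf a w0 J11 J22 J33 im : ℝ)
    (hmuf : 0 < muf) (ha : 0 < a) (hw0 : 0 < w0)
    (hJ11 : 0 < J11) (hJ22 : 0 < J22) (hJ33 : 0 < J33)
    (f46 f52 f63 f64 b42 b51 b61 b62' b51'' E : ℝ)
    (hf46 : f46 = (-J11 + J22 - J33) * w0 / J11)
    (hf52 : f52 = 6 * (J33 - J11) * w0 ^ 2 / J22)
    (hf63 : f63 = 2 * (J11 - J22) * w0 ^ 2 / J33)
    (hf64 : f64 = (J11 - J22 + J33) * w0 / J33)
    (hb42 : b42 = (2 * muf / (a ^ 3 * J11)) * sin im)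
    (hb51 : b51 = -(2 * muf / (a ^ 3 * J22)) * sin im)
    (hb61 : b61 = -(muf / (a ^ 3 * J33)) * cos im)
    (hb62' : b62' = (muf * w0 / (a ^ 3 * J33)) * sin im)
    (hb51'' : b51'' = (2 * muf * w0 ^ 2 / (a ^ 3 * J22)) * sin im)
    (hE : E = b51 * b62' * f46 * b61 - b42 * ((1/2) * f52 * b51 + b51'') * b61 +
      (1/2) * f63 * b61 * b42 * b51)
    (hsin : sin im ≠ 0) (hcos : cos im ≠ 0)
    (hJ : J33 ≠ J22)
    (hJ2 : J22 * (J11 - J22 + J33) ≠ 6 * J33 * (J33 - J11)) :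
    f64 * b42 - 2 * b62' ≠ 0 ∧ E ≠ 0 ∧
      -b42 * (f64 * b42 - 2 * b62') * b51 * E ≠ 0 := by
  have hane : a ≠ 0 := ha.ne'
  have hmne : muf ≠ 0 := hmuf.ne'
  have hwne : w0 ≠ 0 := hw0.ne'
  have h11 : J11 ≠ 0 := hJ11.ne'
  have h22 : J22 ≠ 0 := hJ22.ne'
  have h33 : J33 ≠ 0 := hJ33.ne'
  have hd : J33 - J22 ≠ 0 := sub_ne_zero.mpr hJ
  have hd2 : J22 * (J11 - J22 + J33) - 6 * J33 * (J33 - J11) ≠ 0 := sub_ne_zero.mpr hJ2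
  have h1 : f64 * b42 - 2 * b62' =
      2 * muf * w0 * sin im * (J33 - J22) / (a ^ 3 * J11 * J33) := by
    subst hf64 hb42 hb62'
    field_simp
    ring
  have h2 : E = 2 * muf ^ 3 * sin im ^ 2 * cos im * w0 ^ 2 *
      (J22 * (J11 - J22 + J33) - 6 * J33 * (J33 - J11)) /
      (a ^ 9 * J11 * J22 ^ 2 * J33 ^ 2) := by
    subst hE hf46 hf52 hf63 hb42 hb51 hb61 hb62' hb51''
    field_simp
    ring
  have hb42ne : b42 ≠ 0 := by
    rw [hb42]; positivity
  have hb51ne : b51 ≠ 0 := by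
    rw [hb51]
    simp only [neg_mul, neg_ne_zero]
    positivity
  have hA : f64 * b42 - 2 * b62' ≠ 0 := by
    rw [h1]; positivity
  have hB : E ≠ 0 := by
    rw [h2]; positivity
  exact ⟨hA, hB, by
    simp only [neg_mul, neg_ne_zero]
    exact mul_ne_zero (mul_ne_zero (mul_ne_zero hb42ne hA) hb51ne) hB⟩
end
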